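/- arXiv:1106.4588 — 2 statements merged into one kernel-verified Lean document; each statement's English description precedes it below -/
import Mathlib

section
/- Let M, N ⊆ ℝ³ be compact sets, let μ be the 2-dimensional Hausdorff measure restricted to M and ν the 2-dimensional Hausdorff measure restricted to N, and assume μ(M) = 1 = ν(N) and that every nonempty relatively open subset of M has positive μ-measure and every nonempty relatively open subset of N has positive ν-measure. Suppose that for every n ≥ 1 there exist a continuous bijection Cₙ : M → N with pushforward of μ under Cₙ equal to ν, and an affine isometry Rₙ of ℝ³, such that ∫_M ‖Rₙ x − Cₙ x‖² dμ(x) < 1/n. Then M and N are congruent: there exists an affine isometry R of ℝ³ with R(M) = N. -/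
/-! Since every ball around a point `x ∈ M` carries positive mass, smallness of
`∫_M ‖Rₙ y - Cₙ y‖²` forces (Chebyshev) a point `y` near `x` with `Rₙ y` close to `Cₙ y ∈ N`;
hence `Rₙ x` is eventually close to `N`. At a single point this bounds the translation parts
of the `Rₙ`, so a subsequence converges pointwise to an affine isometry `R` with `R '' M ⊆ N`.
Then `R '' M` is a closed subset of `N` with `μH[2] (R '' M) = μH[2] M = μH[2] N < ∞`, and
since nonempty relatively open subsets of `N` have positive measure, `R '' M = N`. -/

open MeasureTheory

noncomputable section

local notation "E3" => EuclideanSpace ℝ (Fin 3)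

open Filter Metric Bornology Set Topology ENNReal

theorem exists_mem_lt_of_setIntegral_lt {α : Type*} [MeasurableSpace α] {μ : Measure α}
    {f : α → ℝ} {s t : Set α} {ε : ℝ} (hf : IntegrableOn f s μ) (hf0 : ∀ x, 0 ≤ f x)
    (ht : MeasurableSet t) (hts : t ⊆ s) (hμt : μ t ≠ ∞)
    (h : ∫ x in s, f x ∂μ < ε * μ.real t) : ∃ x ∈ t, f x < ε := by
  by_contra! hle
  have h1 := setIntegral_ge_of_const_le_real ht hμt hle (hf.mono_set hts)
  have h2 := setIntegral_mono_set hf (Eventually.of_forall hf0) hts.eventuallyLE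
  linarith

theorem eventually_mem_thickening_of_integral_tendsto_zero {E : Type*}
    [NormedAddCommGroup E] [MeasurableSpace E] [OpensMeasurableSpace E] {μ : Measure E}
    {M N : Set E} (hM : MeasurableSet M) (hμM : μ M ≠ ∞) {R C : ℕ → E → E}
    (hR : ∀ n, Isometry (R n)) (hC : ∀ n, MapsTo (C n) M N)
    (hint : ∀ n, IntegrableOn (fun y => ‖R n y - C n y‖ ^ 2) M μ)
    (hlim : Tendsto (fun n => ∫ y in M, ‖R n y - C n y‖ ^ 2 ∂μ) atTop (𝓝 0))
    {x : E} (hx : ∀ r > 0, 0 < μ (ball x r ∩ M)) {ε : ℝ} (hε : 0 < ε) :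
    ∀ᶠ n in atTop, R n x ∈ thickening ε N := by
  set t := ball x (ε / 2) ∩ M
  have ht : MeasurableSet t := measurableSet_ball.inter hM
  have hμt : μ t ≠ ∞ := measure_ne_top_of_subset inter_subset_right hμM
  have hpos : 0 < (ε / 2) ^ 2 * μ.real t :=
    mul_pos (by positivity) (ENNReal.toReal_pos (hx _ (half_pos hε)).ne' hμt)
  filter_upwards [hlim.eventually_lt_const hpos] with n hn
  obtain ⟨y, ⟨hyx, hyM⟩, hy⟩ :=
    exists_mem_lt_of_setIntegral_lt (hint n) (fun _ => by positivity) ht inter_subset_right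
      hμt hn
  refine mem_thickening_iff.2 ⟨C n y, hC n hyM, ?_⟩
  calc dist (R n x) (C n y) ≤ dist (R n x) (R n y) + dist (R n y) (C n y) :=
        dist_triangle _ _ _
    _ = dist y x + ‖R n y - C n y‖ := by rw [(hR n).dist_eq, dist_comm x y, ← dist_eq_norm]
    _ < ε / 2 + ε / 2 := add_lt_add hyx (lt_of_pow_lt_pow_left₀ 2 (by positivity) hy)
    _ = ε := add_halves ε

theorem AffineIsometryEquiv.exists_subseq_tendsto {E : Type*} [NormedAddCommGroup E]
    [NormedSpace ℝ E] [FiniteDimensional ℝ E] (R : ℕ → E ≃ᵃⁱ[ℝ] E) {x₀ : E} {s : Set E}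
    (hs : IsBounded s) (hR : ∃ᶠ n in atTop, R n x₀ ∈ s) :
    ∃ (R' : E ≃ᵃⁱ[ℝ] E) (φ : ℕ → ℕ), StrictMono φ ∧
      ∀ x, Tendsto (fun k => R (φ k) x) atTop (𝓝 (R' x)) := by
  let L : ℕ → E →L[ℝ] E := fun n => (R n).linearIsometryEquiv.toContinuousLinearEquiv
  have hR_apply : ∀ n x, R n x = L n x + R n 0 := fun n x => by
    simpa [L] using (R n).map_vadd 0 x
  have hmem : ∃ᶠ n in atTop,
      (L n, R n 0) ∈ closedBall (0 : E →L[ℝ] E) 1 ×ˢ cthickening ‖x₀‖ s := by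
    refine hR.mono fun n hn => ⟨?_, mem_cthickening_of_dist_le _ _ _ _ hn (by simp)⟩
    exact mem_closedBall_zero_iff.2 (LinearIsometry.norm_toContinuousLinearMap_le _)
  obtain ⟨⟨T, b⟩, -, φ, hφ, hlim⟩ :=
    tendsto_subseq_of_frequently_bounded (isBounded_closedBall.prod hs.cthickening) hmem
  have hT : ∀ v, ‖T v‖ = ‖v‖ := fun v => by
    have hcont : Continuous fun p : (E →L[ℝ] E) × E => ‖p.1 v‖ :=
      (continuous_fst.clm_apply continuous_const).norm
    refine tendsto_nhds_unique ((hcont.tendsto _).comp hlim) ?_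
    simp [L, Function.comp_def]
  let T' : E ≃ₗᵢ[ℝ] E := LinearIsometry.toLinearIsometryEquiv ⟨T, hT⟩ rfl
  refine ⟨T'.toAffineIsometryEquiv.trans (AffineIsometryEquiv.constVAdd ℝ E b), φ, hφ,
    fun x => ?_⟩
  have hcont : Continuous fun p : (E →L[ℝ] E) × E => p.1 x + p.2 :=
    (continuous_fst.clm_apply continuous_const).add continuous_snd
  have hconv : Tendsto (fun k => L (φ k) x + R (φ k) 0) atTop (𝓝 (T x + b)) :=
    (hcont.tendsto _).comp hlim
  convert hconv.congr fun k => (hR_apply (φ k) x).symm using 2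
  simp [T', add_comm]

theorem IsClosed.eq_of_subset_of_measure_le {X : Type*} [TopologicalSpace X]
    [MeasurableSpace X] [OpensMeasurableSpace X] {μ : Measure X} {K N : Set X}
    (hK : IsClosed K) (hKN : K ⊆ N) (hμ : μ N ≤ μ K) (hμK : μ K ≠ ∞)
    (hN : ∀ U : Set X, IsOpen U → (U ∩ N).Nonempty → 0 < μ (U ∩ N)) : K = N := by
  refine hKN.antisymm fun y hyN => ?_
  by_contra hyK
  have hpos : 0 < μ (N \ K) := by
    rw [sdiff_eq_compl_inter]
    exact hN _ hK.isOpen_compl ⟨y, hyK, hyN⟩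
  have hsplit : μ K + μ (N \ K) = μ N := by
    rw [← measure_inter_add_sdiff N hK.measurableSet, inter_eq_right.2 hKN]
  exact (ENNReal.lt_add_right hμK hpos.ne').not_ge (hsplit ▸ hμ)

/-- Let `M, N ⊆ ℝ³` be compact with unit 2-dimensional Hausdorff measure, and
suppose every nonempty relatively open subset of `M` (resp. `N`) has positive measure. If for
every `n ≥ 1` there are a continuous measure-preserving bijection `Cₙ : M → N` and an affine
isometry `Rₙ` with `∫_M ‖Rₙ x − Cₙ x‖² dμ < 1/n`, then `M` and `N` are congruent. -/
theorem continuous_procrustes_zero_implies_congruent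
    (M N : Set E3) (hM : IsCompact M) (hN : IsCompact N)
    (hμ1 : μH[2] M = 1) (hν1 : μH[2] N = 1)
    (hMopen : ∀ U : Set E3, IsOpen U → (U ∩ M).Nonempty → 0 < μH[2] (U ∩ M))
    (hNopen : ∀ U : Set E3, IsOpen U → (U ∩ N).Nonempty → 0 < μH[2] (U ∩ N))
    (h : ∀ n : ℕ, 1 ≤ n → ∃ (C : E3 → E3) (R : E3 ≃ᵃⁱ[ℝ] E3),
      ContinuousOn C M ∧ Set.BijOn C M N ∧
      Measure.map C (Measure.restrict μH[2] M) = Measure.restrict μH[2] N ∧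
      ∫ x in M, ‖R x - C x‖ ^ 2 ∂(μH[2]) < 1 / (n : ℝ)) :
    ∃ R : E3 ≃ᵃⁱ[ℝ] E3, ⇑R '' M = N := by
  choose C R hC hCMN _ hint using fun n : ℕ => h (n + 1) (Nat.le_add_left 1 n)
  have hμM : μH[2] M ≠ ∞ := by simp [hμ1]
  have hintM : ∀ n, IntegrableOn (fun x => ‖R n x - C n x‖ ^ 2) M μH[2] := fun n =>
    (((R n).continuous.continuousOn.sub (hC n)).norm.pow 2).integrableOn_of_subset_isCompact
      hM hM.measurableSet subset_rfl hμM
  have hlim : Tendsto (fun n => ∫ x in M, ‖R n x - C n x‖ ^ 2 ∂μH[2]) atTop (𝓝 0) :=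
    squeeze_zero (fun n => integral_nonneg fun x => by positivity)
      (fun n => by simpa using (hint n).le) tendsto_one_div_add_atTop_nhds_zero_nat
  have hnear : ∀ x ∈ M, ∀ ε > 0, ∀ᶠ n in atTop, R n x ∈ thickening ε N := fun x hx ε hε =>
    eventually_mem_thickening_of_integral_tendsto_zero hM.measurableSet hμM
      (fun n => (R n).isometry) (fun n => (hCMN n).mapsTo) hintM hlim
      (fun r hr => hMopen _ isOpen_ball ⟨x, mem_ball_self hr, hx⟩) hε
  obtain ⟨x₀, hx₀⟩ : M.Nonempty :=
    nonempty_of_measure_ne_zero (μ := μH[2]) (by simp [hμ1])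
  obtain ⟨R', φ, hφ, hR'⟩ := AffineIsometryEquiv.exists_subseq_tendsto R
    hN.isBounded.thickening (hnear x₀ hx₀ 1 one_pos).frequently
  have hsub : R' '' M ⊆ N := by
    rintro _ ⟨x, hx, rfl⟩
    rw [← hN.isClosed.closure_eq, closure_eq_iInter_cthickening]
    exact mem_iInter₂.2 fun ε hε => closure_thickening_subset_cthickening ε N
      (mem_closure_of_tendsto (hR' x) (hφ.tendsto_atTop.eventually (hnear x hx ε hε)))
  have hR'M : μH[2] (R' '' M) = μH[2] M :=
    R'.isometry.hausdorffMeasure_image (Or.inr R'.surjective) M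
  refine ⟨R', (hM.image R'.continuous).isClosed.eq_of_subset_of_measure_le hsub ?_ ?_
    hNopen⟩
  · rw [hR'M, hμ1, hν1]
  · rwa [hR'M]
end
end

section
/- Let M, N, L ⊆ ℝ³ be compact sets with Borel probability measures μ, ν, σ respectively. Define D(M,N) := inf over all homeomorphisms C : M → N with pushforward of μ under C equal to ν, of dₚ(M,N;C) (and analogously D(N,L) using ν, σ, and D(M,L) using μ, σ; each infimum is +∞ if the corresponding class is empty). Then D(M,L) ≤ D(M,N) + D(N,L). -/
/-!
Given `C₁ : M ≃ₜ N`, `C₂ : N ≃ₜ L` and rigid motions `R₁`, `R₂`, test `C₂ ∘ C₁` against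
`R₂ ∘ R₁`. Pointwise, `‖R₂ (R₁ x) - C₂ (C₁ x)‖ ≤ ‖R₁ x - C₁ x‖ + ‖R₂ (C₁ x) - C₂ (C₁ x)‖`
because `R₂` is an isometry; Minkowski's inequality in `L²(μ)` and the change of variables
`ν = C₁₊ μ` turn the two terms into the discrepancies of `(C₁, R₁)` and `(C₂, R₂)`.
-/

open MeasureTheory

noncomputable section

local notation "E3" => EuclideanSpace ℝ (Fin 3)

section

variable {X Y E F G : Type*} [MeasurableSpace X] [MeasurableSpace Y]
  [NormedAddCommGroup E] [NormedSpace ℝ E] [NormedAddCommGroup F] [NormedAddCommGroup G]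
  {μ : Measure X}

theorem sqrt_integral_norm_sq_eq_lpNorm {f : X → F} (hf : AEStronglyMeasurable f μ) :
    √(∫ x, ‖f x‖ ^ 2 ∂μ) = lpNorm f 2 μ := by
  rw [show (2 : ENNReal) = ((2 : NNReal) : ENNReal) from rfl,
    lpNorm_nnreal_eq_integral_norm_rpow two_ne_zero hf, Real.sqrt_eq_rpow]
  norm_num

theorem MeasureTheory.MemLp.isometry_comp [IsFiniteMeasure μ] {p : ENNReal} {f : X → F}
    {e : F → G} (he : Isometry e) (hf : MemLp f p μ) : MemLp (e ∘ f) p μ := by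
  have hef : AEStronglyMeasurable (e ∘ f) μ := he.continuous.comp_aestronglyMeasurable hf.1
  have hshift : MemLp (e ∘ f - fun _ => e 0) p μ :=
    (memLp_congr_norm (hef.sub aestronglyMeasurable_const) hf.1
      (.of_forall fun x => by simp [← dist_eq_norm, he.dist_eq])).2 hf
  simpa using hshift.add (memLp_const (e 0))

/-- `dₚ(M,N;C) = procrustesDiscrepancy μ (↑) ((↑) ∘ C)`. -/
def procrustesDiscrepancy (μ : Measure X) (f g : X → E) : ℝ :=
  ⨅ R : E ≃ᵃⁱ[ℝ] E, √(∫ x, ‖R (f x) - g x‖ ^ 2 ∂μ)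

theorem procrustesDiscrepancy_nonneg (f g : X → E) : 0 ≤ procrustesDiscrepancy μ f g :=
  Real.iInf_nonneg fun _ => Real.sqrt_nonneg _

theorem procrustesDiscrepancy_map {φ : X → Y} (hφ : AEMeasurable φ μ) {f g : Y → E}
    (hf : AEStronglyMeasurable f (μ.map φ)) (hg : AEStronglyMeasurable g (μ.map φ)) :
    procrustesDiscrepancy (μ.map φ) f g = procrustesDiscrepancy μ (f ∘ φ) (g ∘ φ) := by
  unfold procrustesDiscrepancy
  congr with R
  rw [integral_map hφ]
  · rfl
  · exact ((R.continuous.comp_aestronglyMeasurable hf).sub hg).norm.pow 2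

theorem procrustesDiscrepancy_triangle [IsFiniteMeasure μ] {f g h : X → E}
    (hf : MemLp f 2 μ) (hg : MemLp g 2 μ) (hh : AEStronglyMeasurable h μ) :
    procrustesDiscrepancy μ f h ≤ procrustesDiscrepancy μ f g + procrustesDiscrepancy μ g h := by
  have : Nonempty (E ≃ᵃⁱ[ℝ] E) := ⟨AffineIsometryEquiv.refl ℝ E⟩
  refine le_ciInf_add_ciInf fun R₁ R₂ => ?_
  have hR₂R₁f := (hf.isometry_comp R₁.isometry).isometry_comp R₂.isometry
  have hR₂g := hg.isometry_comp R₂.isometry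
  calc procrustesDiscrepancy μ f h
      ≤ √(∫ x, ‖R₂ (R₁ (f x)) - h x‖ ^ 2 ∂μ) :=
        ciInf_le ⟨0, by rintro _ ⟨R, rfl⟩; exact Real.sqrt_nonneg _⟩ (R₁.trans R₂)
    _ = lpNorm (R₂ ∘ R₁ ∘ f - h) 2 μ := sqrt_integral_norm_sq_eq_lpNorm (hR₂R₁f.1.sub hh)
    _ ≤ lpNorm (R₂ ∘ R₁ ∘ f - R₂ ∘ g) 2 μ + lpNorm (R₂ ∘ g - h) 2 μ :=
        lpNorm_sub_le_lpNorm_sub_add_lpNorm_sub hR₂R₁f hR₂g one_le_two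
    _ = √(∫ x, ‖R₂ (R₁ (f x)) - R₂ (g x)‖ ^ 2 ∂μ) + √(∫ x, ‖R₂ (g x) - h x‖ ^ 2 ∂μ) := by
        rw [← sqrt_integral_norm_sq_eq_lpNorm (hR₂R₁f.1.sub hR₂g.1),
          ← sqrt_integral_norm_sq_eq_lpNorm (hR₂g.1.sub hh)]
        rfl
    _ = √(∫ x, ‖R₁ (f x) - g x‖ ^ 2 ∂μ) + √(∫ x, ‖R₂ (g x) - h x‖ ^ 2 ∂μ) := by
        simp only [← dist_eq_norm, R₂.dist_map]

end

theorem continuous_procrustes_triangle_general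
    (M N L : Set E3) (hM : IsCompact M)
    (μ : Measure M) [IsProbabilityMeasure μ] (ν : Measure N)
    (σ : Measure L) :
    (⨅ (C : M ≃ₜ L) (_ : Measure.map C μ = σ),
        ENNReal.ofReal (⨅ R : E3 ≃ᵃⁱ[ℝ] E3,
          Real.sqrt (∫ x, ‖R (x : E3) - (C x : E3)‖ ^ 2 ∂μ)))
      ≤ (⨅ (C : M ≃ₜ N) (_ : Measure.map C μ = ν),
          ENNReal.ofReal (⨅ R : E3 ≃ᵃⁱ[ℝ] E3,
            Real.sqrt (∫ x, ‖R (x : E3) - (C x : E3)‖ ^ 2 ∂μ)))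
        + ⨅ (C : N ≃ₜ L) (_ : Measure.map C ν = σ),
            ENNReal.ofReal (⨅ R : E3 ≃ᵃⁱ[ℝ] E3,
              Real.sqrt (∫ y, ‖R (y : E3) - (C y : E3)‖ ^ 2 ∂ν)) := by
  have : CompactSpace M := isCompact_iff_compactSpace.mp hM
  simp_rw [ENNReal.iInf_add, ENNReal.add_iInf]
  refine le_iInf fun C₁ => le_iInf fun h₁ => le_iInf fun C₂ => le_iInf fun h₂ => ?_
  subst h₁ h₂
  refine iInf₂_le_of_le (C₁.trans C₂)
    (Measure.map_map C₂.continuous.measurable C₁.continuous.measurable).symm ?_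
  change ENNReal.ofReal (procrustesDiscrepancy μ Subtype.val (Subtype.val ∘ C₁.trans C₂)) ≤
    ENNReal.ofReal (procrustesDiscrepancy μ Subtype.val (Subtype.val ∘ C₁)) +
      ENNReal.ofReal (procrustesDiscrepancy (μ.map C₁) Subtype.val (Subtype.val ∘ C₂))
  rw [procrustesDiscrepancy_map C₁.continuous.aemeasurable
      continuous_subtype_val.aestronglyMeasurable
      (continuous_subtype_val.comp C₂.continuous).aestronglyMeasurable,
    ← ENNReal.ofReal_add (procrustesDiscrepancy_nonneg _ _) (procrustesDiscrepancy_nonneg _ _)]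
  exact ENNReal.ofReal_le_ofReal <| procrustesDiscrepancy_triangle
    (continuous_subtype_val.memLp_of_hasCompactSupport (.of_compactSpace _))
    ((continuous_subtype_val.comp C₁.continuous).memLp_of_hasCompactSupport (.of_compactSpace _))
    (continuous_subtype_val.comp (C₁.trans C₂).continuous).aestronglyMeasurable

/-- Triangle inequality for the continuous Procrustes distance
`D(M,N) := inf { dₚ(M,N;C) : C a measure-preserving homeomorphism M → N }`
(`+∞` if no such `C` exists): `D(M,L) ≤ D(M,N) + D(N,L)`. -/
theorem continuous_procrustes_triangle
    (M N L : Set E3) (hM : IsCompact M) (hN : IsCompact N) (hL : IsCompact L)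
    (μ : Measure M) [IsProbabilityMeasure μ] (ν : Measure N) [IsProbabilityMeasure ν]
    (σ : Measure L) [IsProbabilityMeasure σ] :
    (⨅ (C : M ≃ₜ L) (_ : Measure.map C μ = σ),
        ENNReal.ofReal (⨅ R : E3 ≃ᵃⁱ[ℝ] E3,
          Real.sqrt (∫ x, ‖R (x : E3) - (C x : E3)‖ ^ 2 ∂μ)))
      ≤ (⨅ (C : M ≃ₜ N) (_ : Measure.map C μ = ν),
          ENNReal.ofReal (⨅ R : E3 ≃ᵃⁱ[ℝ] E3,
            Real.sqrt (∫ x, ‖R (x : E3) - (C x : E3)‖ ^ 2 ∂μ)))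
        + ⨅ (C : N ≃ₜ L) (_ : Measure.map C ν = σ),
            ENNReal.ofReal (⨅ R : E3 ≃ᵃⁱ[ℝ] E3,
              Real.sqrt (∫ y, ‖R (y : E3) - (C y : E3)‖ ^ 2 ∂ν)) :=
  continuous_procrustes_triangle_general M N L hM μ ν σ
end
end
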